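/- arXiv:2112.01465 — 2 statements merged into one kernel-verified Lean document; each statement's English description precedes it below -/
import Mathlib

section
/- Let W be an n×n nonnegative matrix, let x(0) be a nonnegative initial vector with min positive entry at least l_min0 > 0, and let w = min{W_ij : W_ij > 0} > 0. Define the dynamics x_j(t) = f_{j,t}(∑_i W_ij x_i(t-1)) where f_{j,t}(y) = 0 if y < l_{j,t}, y if l_{j,t} ≤ y < h_{j,t}, and h_{j,t} if y ≥ h_{j,t}. If l_{j,t} ≤ l_min0 · w^t ≤ h_{j,t} for all t > 0 and all j, then for every t > 0 and every j with ∑_i W_ij x_i(t-1) > 0, we have ∑_i W_ij x_i(t-1) ≥ l_{j,t}. In other words, the lower bound thresholds never cause a positive input to be truncated to zero. -/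
/-- The GIP bound function: truncate below `l` to 0 and cap above at `h`. -/
noncomputable def gipBound (l h y : ℝ) : ℝ :=
  if y < l then 0 else if y < h then y else h

theorem stmt0 {n : ℕ} (W : Matrix (Fin n) (Fin n) ℝ)
    (hW : ∀ i j, 0 ≤ W i j)
    (x : ℕ → Fin n → ℝ) (l h : ℕ → Fin n → ℝ)
    (lmin0 w : ℝ) (hlmin0 : 0 < lmin0) (hw : 0 < w)
    (hwmin : ∀ i j, 0 < W i j → w ≤ W i j)
    (hx0nonneg : ∀ j, 0 ≤ x 0 j)
    (hx0 : ∀ j, 0 < x 0 j → lmin0 ≤ x 0 j)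
    (hbounds : ∀ j, ∀ t > 0, 0 ≤ l t j ∧ l t j ≤ h t j)
    (hdyn : ∀ j, ∀ t > 0, x t j = gipBound (l t j) (h t j) (∑ i, W i j * x (t-1) i))
    (hcond : ∀ j, ∀ t > 0, l t j ≤ lmin0 * w ^ t ∧ lmin0 * w ^ t ≤ h t j) :
    ∀ j, ∀ t > 0, 0 < (∑ i, W i j * x (t-1) i) →
      l t j ≤ ∑ i, W i j * x (t-1) i := by
  have key : ∀ t, (∀ j, 0 ≤ x t j) ∧ (∀ j, 0 < x t j → lmin0 * w ^ t ≤ x t j) := by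
    intro t
    induction t with
    | zero =>
      refine ⟨hx0nonneg, fun j hj => ?_⟩
      simpa using hx0 j hj
    | succ t ih =>
      have hsum : ∀ j, 0 < (∑ i, W i j * x t i) →
          lmin0 * w ^ (t + 1) ≤ ∑ i, W i j * x t i := by
        intro j hpos
        have hnn : ∀ i, 0 ≤ W i j * x t i := fun i => mul_nonneg (hW i j) (ih.1 i)
        obtain ⟨i, -, hi⟩ := Finset.exists_lt_of_sum_lt
          (show ∑ _i : Fin n, (0 : ℝ) < ∑ i, W i j * x t i by simpa using hpos)
        have hWpos : 0 < W i j := by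
          rcases (hW i j).lt_or_eq with h' | h'
          · exact h'
          · exfalso; rw [← h', zero_mul] at hi; exact lt_irrefl _ hi
        have hxpos : 0 < x t i := by
          rcases (ih.1 i).lt_or_eq with h' | h'
          · exact h'
          · exfalso; rw [← h', mul_zero] at hi; exact lt_irrefl _ hi
        have h1 : w ≤ W i j := hwmin i j hWpos
        have h2 : lmin0 * w ^ t ≤ x t i := ih.2 i hxpos
        have hterm : lmin0 * w ^ (t + 1) ≤ W i j * x t i := by
          have heq : lmin0 * w ^ (t + 1) = w * (lmin0 * w ^ t) := by ring
          rw [heq]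
          exact mul_le_mul h1 h2 (by positivity) (le_trans hw.le h1)
        exact le_trans hterm
          (Finset.single_le_sum (fun i _ => hnn i) (Finset.mem_univ i))
      constructor
      · intro j
        rw [hdyn j (t + 1) (Nat.succ_pos t)]
        simp only [Nat.add_sub_cancel]
        unfold gipBound
        split_ifs with h1 h2
        · exact le_refl 0
        · push_neg at h1
          exact le_trans (hbounds j (t + 1) (Nat.succ_pos t)).1 h1
        · exact le_trans (hbounds j (t + 1) (Nat.succ_pos t)).1
            (hbounds j (t + 1) (Nat.succ_pos t)).2
      · intro j hj
        rw [hdyn j (t + 1) (Nat.succ_pos t)] at hj ⊢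
        simp only [Nat.add_sub_cancel] at hj ⊢
        unfold gipBound at hj ⊢
        split_ifs at hj ⊢ with h1 h2
        · exact absurd hj (lt_irrefl 0)
        · exact hsum j hj
        · exact (hcond j (t + 1) (Nat.succ_pos t)).2
  intro j t ht hpos
  obtain ⟨s, rfl⟩ := Nat.exists_eq_succ_of_ne_zero ht.ne'
  simp only [Nat.succ_sub_one] at hpos ⊢
  have hnn : ∀ i, 0 ≤ W i j * x s i := fun i => mul_nonneg (hW i j) ((key s).1 i)
  obtain ⟨i, -, hi⟩ := Finset.exists_lt_of_sum_lt
    (show ∑ _i : Fin n, (0 : ℝ) < ∑ i, W i j * x s i by simpa using hpos)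
  have hWpos : 0 < W i j := by
    rcases (hW i j).lt_or_eq with h' | h'
    · exact h'
    · exfalso; rw [← h', zero_mul] at hi; exact lt_irrefl _ hi
  have hxpos : 0 < x s i := by
    rcases ((key s).1 i).lt_or_eq with h' | h'
    · exact h'
    · exfalso; rw [← h', mul_zero] at hi; exact lt_irrefl _ hi
  have h1 : w ≤ W i j := hwmin i j hWpos
  have h2 : lmin0 * w ^ s ≤ x s i := (key s).2 i hxpos
  have hterm : lmin0 * w ^ (s + 1) ≤ W i j * x s i := by
    have heq : lmin0 * w ^ (s + 1) = w * (lmin0 * w ^ s) := by ring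
    rw [heq]
    exact mul_le_mul h1 h2 (by positivity) (le_trans hw.le h1)
  calc l (s + 1) j ≤ lmin0 * w ^ (s + 1) := (hcond j (s + 1) (Nat.succ_pos s)).1
    _ ≤ W i j * x s i := hterm
    _ ≤ ∑ i, W i j * x s i := Finset.single_le_sum (fun i _ => hnn i) (Finset.mem_univ i)
end

section
/- Consider the GIP dynamics with threshold-type bounds: l_{j,t} = (θ_l α)^t l_{j,0} and h_{j,t} = θ_h θ_l^{t-1} α^t h_{j,0} for t > 0, with uniform thresholds θ_{l,j} = θ_l, θ_{h,j} = θ_h and l_{j,0} = 1 for all j. Consider also the MLT dynamics x'_j(t) = g_j(∑_i W_ij x'_i(t-1)) where g_j(y) = 0 if y < l'_j, g_j(y) = ((m_j-1)/(h'_j - l'_j))(y - l'_j) + 1 if l'_j ≤ y < h'_j, and g_j(y) = m_j if y ≥ h'_j, with l'_j = θ_l α, h'_j = θ_h α h_{j,0}, m_j = θ_h h_{j,0}/θ_l. If x_j(0) = x'_j(0) for all j, then x_j(t) = (θ_l α)^t x'_j(t) for all t ≥ 0 and all j. -/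
/-- The MLT bound function with lower bound `l'`, upper bound `h'` and maximum value `m`. -/
noncomputable def mltBound (l' h' m y : ℝ) : ℝ :=
  if y < l' then 0 else if y < h' then ((m - 1) / (h' - l')) * (y - l') + 1 else m

lemma gip_eq_scaled_mlt (s c H m z : ℝ) (hs : 0 < s) (hc : 0 < c)
    (hmH : c * m = H) (_hm1 : 1 ≤ m) :
    gipBound (s * c) (s * H) (s * z) = s * c * mltBound c H m z := by
  unfold gipBound mltBound
  have h1 : s * z < s * c ↔ z < c := mul_lt_mul_iff_right₀ hs
  have h2 : s * z < s * H ↔ z < H := mul_lt_mul_iff_right₀ hs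
  by_cases hzc : z < c
  · simp [h1.mpr hzc, hzc]
  · rw [if_neg (by rw [h1]; exact hzc), if_neg hzc]
    by_cases hzH : z < H
    · rw [if_pos (h2.mpr hzH), if_pos hzH]
      have hcH : c < H := lt_of_le_of_lt (not_lt.mp hzc) hzH
      have hm1' : 0 < m - 1 := by
        by_contra h
        push_neg at h
        have : H ≤ c := by nlinarith
        linarith
      have hHc : H - c = c * (m - 1) := by rw [← hmH]; ring
      rw [hHc]
      field_simp
      ring
    · rw [if_neg (by rw [h2]; exact hzH), if_neg hzH, ← hmH]
      ring

theorem stmt2 {n : ℕ} (W : Matrix (Fin n) (Fin n) ℝ) (hW : ∀ i j, 0 ≤ W i j)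
    (α θl θh : ℝ) (hα : 0 < α) (hθl : 0 < θl) (hθ : θl ≤ θh)
    (h0 : Fin n → ℝ) (hh0 : ∀ j, 1 ≤ h0 j)
    (x x' : ℕ → Fin n → ℝ)
    (hinit : ∀ j, x 0 j = x' 0 j)
    (hdyn : ∀ t j, x (t+1) j =
      gipBound ((θl * α) ^ (t+1)) (θh * θl ^ t * α ^ (t+1) * h0 j) (∑ i, W i j * x t i))
    (hdyn' : ∀ t j, x' (t+1) j =
      mltBound (θl * α) (θh * α * h0 j) (θh * h0 j / θl) (∑ i, W i j * x' t i)) :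
    ∀ t j, x t j = (θl * α) ^ t * x' t j := by
  have hc : 0 < θl * α := mul_pos hθl hα
  intro t
  induction t with
  | zero => intro j; simpa using hinit j
  | succ t ih =>
    intro j
    have hsum : ∑ i, W i j * x t i = (θl * α) ^ t * ∑ i, W i j * x' t i := by
      rw [Finset.mul_sum]
      exact Finset.sum_congr rfl fun i _ => by rw [ih i]; ring
    have hs : 0 < (θl * α) ^ t := pow_pos hc t
    rw [hdyn t j, hdyn' t j, hsum]
    have e1 : (θl * α) ^ (t + 1) = (θl * α) ^ t * (θl * α) := by ring
    have e2 : θh * θl ^ t * α ^ (t + 1) * h0 j = (θl * α) ^ t * (θh * α * h0 j) := by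
      rw [mul_pow]; ring
    have hmH : (θl * α) * (θh * h0 j / θl) = θh * α * h0 j := by
      field_simp
    have hm1 : 1 ≤ θh * h0 j / θl := (le_div_iff₀ hθl).mpr (by nlinarith [hh0 j])
    rw [e1, e2, gip_eq_scaled_mlt _ _ _ _ _ hs hc hmH hm1]
end
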